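/- arXiv:1104.1579 — 7 statements merged into one kernel-verified Lean document; each statement's English description precedes it below -/
import Mathlib

section
/- Let m ≥ 2, k ≥ 1, n ≥ 1 be integers and define F_n(x) = x^{n+k+3} + (m−1)x^{k+3} + (m²−m)x − m². Then every complex zero α of F_n satisfies |α| ≥ 1, and if |α| = 1 then α = 1. -/
/-! Since `m² = 1 + (m - 1) + (m² - m)`, the equation `F_n(α) = 0` reads
`α^(n+k+3) + a α^(k+3) + b α = 1 + a + b` with `a = m - 1 ≥ 0` and `b = m² - m > 0`.
If `|α| < 1`, the triangle inequality makes the left side strictly smaller than the right.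
If `|α| = 1`, taking real parts forces every term to have real part equal to its modulus;
in particular `Re α = 1 = |α|`, so `α = 1`. -/

namespace Complex

open scoped ComplexOrder

variable {z : ℂ} {a b : ℝ} {N K : ℕ}

theorem one_le_norm_of_pow_add_eq (ha : 0 ≤ a) (hb : 0 ≤ b) (hN : N ≠ 0)
    (h : z ^ N + a * z ^ K + b * z = 1 + a + b) : 1 ≤ ‖z‖ := by
  by_contra! hz
  have hzN : ‖z‖ ^ N < 1 := pow_lt_one₀ (norm_nonneg z) hz hN
  have hzK : ‖z‖ ^ K ≤ 1 := pow_le_one₀ (norm_nonneg z) hz.le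
  have : 1 + a + b < 1 + a + b :=
    calc 1 + a + b = ‖z ^ N + a * z ^ K + b * z‖ := by
          rw [h]; norm_cast; rw [Real.norm_of_nonneg (by positivity)]
      _ ≤ ‖z‖ ^ N + a * ‖z‖ ^ K + b * ‖z‖ := by
          refine (norm_add₃_le).trans_eq ?_
          simp [norm_pow, abs_of_nonneg ha, abs_of_nonneg hb]
      _ < 1 + a + b := by
          nlinarith [mul_le_mul_of_nonneg_left hzK ha, mul_le_mul_of_nonneg_left hz.le hb]
  exact this.false

theorem eq_one_of_norm_eq_one_of_pow_add_eq (ha : 0 ≤ a) (hb : 0 < b) (hz : ‖z‖ = 1)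
    (h : z ^ N + a * z ^ K + b * z = 1 + a + b) : z = 1 := by
  have hre : (z ^ N).re + a * (z ^ K).re + b * z.re = 1 + a + b := by
    simpa using congrArg re h
  have hle_one (w : ℂ) (hw : ‖w‖ = 1) : w.re ≤ 1 := hw ▸ re_le_norm w
  have hzN := hle_one (z ^ N) (by rw [norm_pow, hz, one_pow])
  have hzK := hle_one (z ^ K) (by rw [norm_pow, hz, one_pow])
  have hre_one : z.re = 1 := by
    refine le_antisymm (hle_one z hz) ?_
    nlinarith [mul_le_mul_of_nonneg_left hzK ha]
  have hz_nonneg : 0 ≤ z := re_eq_norm.mp (hre_one.trans hz.symm)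
  exact ext hre_one (nonneg_iff.mp hz_nonneg).2.symm

end Complex

theorem stmt2_general (m k n : ℕ) (hm : 2 ≤ m) (α : ℂ)
    (hα : α ^ (n + k + 3) + ((m : ℂ) - 1) * α ^ (k + 3) + ((m : ℂ) ^ 2 - m) * α - (m : ℂ) ^ 2 = 0) :
    1 ≤ ‖α‖ ∧ (‖α‖ = 1 → α = 1) := by
  have hm' : (2 : ℝ) ≤ m := by exact_mod_cast hm
  have ha : (0 : ℝ) ≤ m - 1 := by linarith
  have hb : (0 : ℝ) < m ^ 2 - m := by nlinarith
  have h : α ^ (n + k + 3) + ((m - 1 : ℝ) : ℂ) * α ^ (k + 3) + ((m ^ 2 - m : ℝ) : ℂ) * α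
      = 1 + ((m - 1 : ℝ) : ℂ) + ((m ^ 2 - m : ℝ) : ℂ) := by
    push_cast
    linear_combination hα
  exact ⟨Complex.one_le_norm_of_pow_add_eq ha hb.le (by positivity) h,
    fun hα1 => Complex.eq_one_of_norm_eq_one_of_pow_add_eq ha hb hα1 h⟩

theorem stmt2 (m k n : ℕ) (hm : 2 ≤ m) (hk : 1 ≤ k) (hn : 1 ≤ n) (α : ℂ)
    (hα : α ^ (n + k + 3) + ((m : ℂ) - 1) * α ^ (k + 3) + ((m : ℂ) ^ 2 - m) * α - (m : ℂ) ^ 2 = 0) :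
    1 ≤ ‖α‖ ∧ (‖α‖ = 1 → α = 1) :=
  stmt2_general m k n hm α hα
end

section
/- Let m ≥ 2, k ≥ 1, n ≥ 1 be integers with n ≠ k+1. The polynomial F_n(x) = x^{n+k+3} + (m−1)x^{k+3} + (m²−m)x − m² cannot be written as a product of two binomials (x^{ℓ₁} + r₁)(x^{ℓ₂} + r₂) with positive integers ℓ₁, ℓ₂ and rational numbers r₁, r₂. -/
/-!
Since `(X^a + r)(X^b + s) = X^(a+b) + s X^a + r X^b + rs`, a product of two binomials has
nonzero coefficients only in degrees `0, a, b, a + b`. The coefficients of `F_n` in degrees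
`k + 3` and `1` are nonzero, so `{a, b} = {k + 3, 1}`; comparing coefficients then gives
`s = m - 1`, `r = m² - m` and `rs = -m²`, i.e. `m (m² - m + 1) = 0`, which is impossible.
-/

open Polynomial

section Binomial

variable {R : Type*} [CommSemiring R] {a b : ℕ} (r s : R)

theorem coeff_binomial_mul_binomial (d : ℕ) :
    ((X ^ a + C r) * (X ^ b + C s)).coeff d =
      (if d = a + b then 1 else 0) + (if d = a then s else 0) + (if d = b then r else 0)
        + (if d = 0 then r * s else 0) := by
  have hexpand : (X ^ a + C r) * (X ^ b + C s)
      = X ^ (a + b) + C s * X ^ a + C r * X ^ b + C (r * s) := by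
    rw [C_mul]; ring
  simp only [hexpand, coeff_add, coeff_C_mul, coeff_X_pow, coeff_C, mul_ite, mul_one, mul_zero]

theorem coeff_binomial_mul_binomial_left (ha : a ≠ 0) (hb : b ≠ 0) (hab : a ≠ b) :
    ((X ^ a + C r) * (X ^ b + C s)).coeff a = s := by
  rw [coeff_binomial_mul_binomial, if_neg (by omega), if_pos rfl, if_neg hab, if_neg ha]
  simp only [zero_add, add_zero]

theorem coeff_zero_binomial_mul_binomial (ha : a ≠ 0) (hb : b ≠ 0) :
    ((X ^ a + C r) * (X ^ b + C s)).coeff 0 = r * s := by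
  rw [coeff_binomial_mul_binomial, if_neg (by omega), if_neg (Ne.symm ha), if_neg (Ne.symm hb),
    if_pos rfl]
  simp only [zero_add]

theorem eq_or_eq_of_coeff_binomial_mul_binomial_ne_zero {d : ℕ} (hd : d ≠ 0)
    (hdab : d ≠ a + b)
    (hcoeff : ((X ^ a + C r) * (X ^ b + C s)).coeff d ≠ 0) : d = a ∨ d = b := by
  by_contra! h
  rw [coeff_binomial_mul_binomial, if_neg hdab, if_neg h.1, if_neg h.2, if_neg hd] at hcoeff
  simp at hcoeff

theorem natDegree_binomial_mul_binomial [Nontrivial R] (ha : a ≠ 0) (hb : b ≠ 0) :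
    ((X ^ a + C r) * (X ^ b + C s)).natDegree = a + b := by
  rw [(monic_X_pow_add_C r ha).natDegree_mul (monic_X_pow_add_C s hb), natDegree_X_pow_add_C,
    natDegree_X_pow_add_C]

end Binomial

section F

variable {R : Type*} [CommRing R] (m : R) (k n : ℕ)

noncomputable def F : R[X] :=
  X ^ (n + k + 3) + C (m - 1) * X ^ (k + 3) + C (m ^ 2 - m) * X - C (m ^ 2)

theorem coeff_F (d : ℕ) :
    (F m k n).coeff d = (if d = n + k + 3 then 1 else 0) + (if d = k + 3 then m - 1 else 0)
      + (if d = 1 then m ^ 2 - m else 0) - (if d = 0 then m ^ 2 else 0) := by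
  simp only [F, coeff_add, coeff_sub, coeff_C_mul, coeff_X_pow, coeff_X, coeff_C, mul_ite,
    mul_one, mul_zero, eq_comm (a := 1)]

theorem coeff_F_zero : (F m k n).coeff 0 = -m ^ 2 := by
  simp [coeff_F]

theorem coeff_F_one : (F m k n).coeff 1 = m ^ 2 - m := by
  simp [coeff_F]

variable {n}

theorem coeff_F_add_three (hn : n ≠ 0) : (F m k n).coeff (k + 3) = m - 1 := by
  simp [coeff_F, hn]

theorem natDegree_F [Nontrivial R] (hn : n ≠ 0) : (F m k n).natDegree = n + k + 3 := by
  unfold F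
  compute_degree!
  simp [hn]

end F

theorem F_ne_binomial_mul_binomial {m : ℚ} (hm₀ : m ≠ 0) (hm₁ : m ≠ 1) {k n : ℕ}
    (hn : n ≠ 0) {a b : ℕ} (ha : a ≠ 0) (hb : b ≠ 0) (r s : ℚ) :
    F m k n ≠ (X ^ a + C r) * (X ^ b + C s) := by
  intro h
  have hdeg : a + b = n + k + 3 := by
    rw [← natDegree_binomial_mul_binomial r s ha hb, ← h, natDegree_F m k hn]
  have hk : k + 3 = a ∨ k + 3 = b := by
    refine eq_or_eq_of_coeff_binomial_mul_binomial_ne_zero r s (by omega) (by omega) ?_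
    rw [← h, coeff_F_add_three m k hn]
    exact sub_ne_zero.mpr hm₁
  have hone : 1 = a ∨ 1 = b := by
    refine eq_or_eq_of_coeff_binomial_mul_binomial_ne_zero r s one_ne_zero (by omega) ?_
    rw [← h, coeff_F_one, sq, ← mul_sub_one]
    exact mul_ne_zero hm₀ (sub_ne_zero.mpr hm₁)
  wlog hka : k + 3 = a generalizing a b r s
  · exact this hb ha s r (h.trans (mul_comm _ _)) (by omega) hk.symm hone.symm
      (hk.resolve_left hka)
  obtain rfl : b = 1 := by omega
  have hs : s = m - 1 := by
    rw [← coeff_binomial_mul_binomial_left r s ha hb (by omega), ← h, ← hka,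
      coeff_F_add_three m k hn]
  have hr : r = m ^ 2 - m := by
    rw [← coeff_binomial_mul_binomial_left s r hb ha (by omega), mul_comm, ← h,
      coeff_F_one]
  have hrs : r * s = -m ^ 2 := by
    rw [← coeff_zero_binomial_mul_binomial r s ha hb, ← h, coeff_F_zero]
  have hcubic : m * (m ^ 2 - m + 1) = 0 := by
    rw [hr, hs] at hrs
    linear_combination hrs
  have hquad : m ^ 2 - m + 1 ≠ 0 := by nlinarith [sq_nonneg (m - 1)]
  exact mul_ne_zero hm₀ hquad hcubic

theorem stmt5_general (m : ℤ) (hm : 2 ≤ m) (k n : ℕ) (hn : 1 ≤ n) :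
    ¬ ∃ (l₁ l₂ : ℕ) (r₁ r₂ : ℚ), 1 ≤ l₁ ∧ 1 ≤ l₂ ∧
      (X ^ (n + k + 3) + C ((m : ℚ) - 1) * X ^ (k + 3) + C ((m : ℚ) ^ 2 - m) * X
          - C ((m : ℚ) ^ 2) : Polynomial ℚ)
        = (X ^ l₁ + C r₁) * (X ^ l₂ + C r₂) := by
  rintro ⟨l₁, l₂, r₁, r₂, hl₁, hl₂, h⟩
  have hm' : (2 : ℚ) ≤ m := by exact_mod_cast hm
  exact F_ne_binomial_mul_binomial (by linarith) (by linarith) (by omega) (by omega) (by omega)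
    r₁ r₂ h

theorem stmt5 (m : ℤ) (hm : 2 ≤ m) (k n : ℕ) (hk : 1 ≤ k) (hn : 1 ≤ n) (hnk : n ≠ k + 1) :
    ¬ ∃ (l₁ l₂ : ℕ) (r₁ r₂ : ℚ), 1 ≤ l₁ ∧ 1 ≤ l₂ ∧
      (X ^ (n + k + 3) + C ((m : ℚ) - 1) * X ^ (k + 3) + C ((m : ℚ) ^ 2 - m) * X
          - C ((m : ℚ) ^ 2) : Polynomial ℚ)
        = (X ^ l₁ + C r₁) * (X ^ l₂ + C r₂) :=
  stmt5_general m hm k n hn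
end

section
/- Let m ≥ 2, k ≥ 1, n ≥ 1 be integers with n ≠ k+1. Any common divisor h(x) ∈ ℚ[x] of g₁(x) = x^{n+k+3} − m² and g₂(x) = (m−1)x^{k+3} + (m²−m)x divides x^{n+1}(x^{k−n+1} − 1) if n < k+1, and divides x^{k+2}(x^{n−k−1} − 1) if n > k+1. -/
/-! Dividing out the unit `m - 1`, `h` divides `p = X (X^(k+2) + m)`, and then
`m (X^(n+1) + m) = X^n p - g₁` shows that `h` divides `q = X^(n+1) + m`. Multiplying whichever of
`p`, `q` has the lower top degree by a power of `X` and subtracting the other cancels the top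
powers and leaves `m` times the asserted divisor. -/

open Polynomial

namespace Polynomial

variable {K : Type*} [Field K] {a : K} {h : K[X]}

theorem dvd_X_pow_add_C_of_dvd_X_pow_sub_C_sq (ha : a ≠ 0) {r s : ℕ}
    (hg : h ∣ X ^ (r + 1 + s) - C (a ^ 2)) (hp : h ∣ X * (X ^ s + C a)) :
    h ∣ X ^ (r + 1) + C a := by
  have key : C a * (X ^ (r + 1) + C a) =
      X ^ r * (X * (X ^ s + C a)) - (X ^ (r + 1 + s) - C (a ^ 2)) := by
    rw [C_pow]; ring
  rw [← dvd_C_mul ha, key]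
  exact dvd_sub (hp.mul_left _) hg

theorem dvd_X_mul_X_pow_sub_one_of_dvd (ha : a ≠ 0) {r e : ℕ}
    (hq : h ∣ X ^ r + C a) (hp : h ∣ X * (X ^ (r + e) + C a)) :
    h ∣ X * (X ^ e - 1) := by
  have key : C a * (X * (X ^ e - 1)) = X ^ (e + 1) * (X ^ r + C a) - X * (X ^ (r + e) + C a) := by
    ring
  rw [← dvd_C_mul ha, key]
  exact dvd_sub (hq.mul_left _) hp

theorem dvd_X_pow_sub_one_of_dvd (ha : a ≠ 0) {s e : ℕ}
    (hq : h ∣ X ^ (s + (e + 1)) + C a) (hp : h ∣ X * (X ^ s + C a)) :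
    h ∣ X ^ (e + 1) - 1 := by
  have key : C a * (X ^ (e + 1) - 1) = X ^ e * (X * (X ^ s + C a)) - (X ^ (s + (e + 1)) + C a) := by
    ring
  rw [← dvd_C_mul ha, key]
  exact dvd_sub (hp.mul_left _) hq

end Polynomial

theorem stmt6_general (m : ℤ) (hm : 2 ≤ m) (k n : ℕ)
    (h : Polynomial ℚ)
    (h1 : h ∣ X ^ (n + k + 3) - C ((m : ℚ) ^ 2))
    (h2 : h ∣ C ((m : ℚ) - 1) * X ^ (k + 3) + C ((m : ℚ) ^ 2 - m) * X) :
    (n < k + 1 → h ∣ X ^ (n + 1) * (X ^ (k - n + 1) - 1)) ∧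
    (n > k + 1 → h ∣ X ^ (k + 2) * (X ^ (n - k - 1) - 1)) := by
  have hm' : (2 : ℚ) ≤ m := by exact_mod_cast hm
  have hp : h ∣ X * (X ^ (k + 2) + C (m : ℚ)) := by
    rw [← dvd_C_mul (show (m : ℚ) - 1 ≠ 0 by linarith)]
    convert h2 using 1
    simp only [map_sub, map_pow, map_one]; ring
  have hq : h ∣ X ^ (n + 1) + C (m : ℚ) :=
    dvd_X_pow_add_C_of_dvd_X_pow_sub_C_sq (by positivity)
      (by rwa [show n + 1 + (k + 2) = n + k + 3 by ring]) hp
  constructor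
  · intro hlt
    obtain ⟨e, rfl⟩ := Nat.exists_eq_add_of_le (Nat.lt_succ_iff.mp hlt)
    have hdvd := dvd_X_mul_X_pow_sub_one_of_dvd (e := e + 1) (by positivity) hq
      (by rwa [show n + 1 + (e + 1) = n + e + 2 by ring])
    rw [show n + e - n + 1 = e + 1 by omega, pow_succ, mul_assoc]
    exact hdvd.mul_left _
  · intro hgt
    obtain ⟨d, rfl⟩ := Nat.exists_eq_add_of_le (show k + 2 ≤ n from hgt)
    have hdvd := dvd_X_pow_sub_one_of_dvd (by positivity)
      (by rwa [show k + 2 + (d + 1) = k + 2 + d + 1 by ring]) hp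
    rw [show k + 2 + d - k - 1 = d + 1 by omega]
    exact hdvd.mul_left _

theorem stmt6 (m : ℤ) (hm : 2 ≤ m) (k n : ℕ) (hk : 1 ≤ k) (hn : 1 ≤ n) (hnk : n ≠ k + 1)
    (h : Polynomial ℚ)
    (h1 : h ∣ X ^ (n + k + 3) - C ((m : ℚ) ^ 2))
    (h2 : h ∣ C ((m : ℚ) - 1) * X ^ (k + 3) + C ((m : ℚ) ^ 2 - m) * X) :
    (n < k + 1 → h ∣ X ^ (n + 1) * (X ^ (k - n + 1) - 1)) ∧
    (n > k + 1 → h ∣ X ^ (k + 2) * (X ^ (n - k - 1) - 1)) :=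
  stmt6_general m hm k n h h1 h2
end

section
/- Let k, m, n be positive integers with m² > k+1. Suppose α ∈ ℂ, α ≠ 1, and both α and 1/α are zeros of F_n(x) = x^{n+1} + (m²−k−1)x² − (2m²−k)x + m². Then α is a root of g(x) = (m⁴−m²k−m²)x² − (2m⁴−2m²k+k²+k)x + (m⁴−m²k−m²). -/
/-!
Write `q x = A x² - B x + C` with `A = m² - k - 1`, `B = 2m² - k`, `C = m²`, so that
`F_n x = x^(n+1) + q x`. The two root conditions give `α^(n+1) = -q α` and, after multiplying
by `α^(n+3)`, `α² = -α^(n+1) (C α² - B α + A)`; eliminating `α^(n+1)` leaves the palindromic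
quartic `q(α) (C α² - B α + A) = α²`. Since `q 1 = -1`, this quartic vanishes to second order
at `1`, and its cofactor after dividing by `(α - 1)²` is exactly `g`.
-/

theorem quadratic_mul_reciprocal_eq_sq {K : Type*} [Field K] {A B C x : K} (n : ℕ)
    (hx : x ≠ 0) (h : x ^ (n + 1) + A * x ^ 2 - B * x + C = 0)
    (h' : (1 / x) ^ (n + 1) + A * (1 / x) ^ 2 - B * (1 / x) + C = 0) :
    (A * x ^ 2 - B * x + C) * (C * x ^ 2 - B * x + A) = x ^ 2 := by
  have hy : x * (1 / x) = 1 := mul_one_div_cancel hx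
  have hp : x ^ (n + 1) * (1 / x) ^ (n + 1) = 1 := by rw [← mul_pow, hy, one_pow]
  linear_combination (C * x ^ 2 - B * x + A) * h - x ^ 2 * x ^ (n + 1) * h' + x ^ 2 * hp
    + A * x ^ (n + 1) * (x * (1 / x) + 1) * hy - B * x ^ (n + 1) * x * hy

theorem quadratic_mul_reciprocal_sub_sq_eq {R : Type*} [CommRing R] {A B C : R}
    (hB : B = A + C + 1) (x : R) :
    (A * x ^ 2 - B * x + C) * (C * x ^ 2 - B * x + A) - x ^ 2
      = (x - 1) ^ 2 * (A * C * x ^ 2 - (B * (A + C) - 2 * A * C) * x + A * C) := by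
  subst hB
  ring

theorem symmetric_quadratic_eq_zero_of_quadratic_mul_reciprocal_eq_sq {R : Type*} [CommRing R]
    [IsDomain R] {A B C x : R} (hB : B = A + C + 1) (hx : x ≠ 1)
    (h : (A * x ^ 2 - B * x + C) * (C * x ^ 2 - B * x + A) = x ^ 2) :
    A * C * x ^ 2 - (B * (A + C) - 2 * A * C) * x + A * C = 0 := by
  have hfactor := quadratic_mul_reciprocal_sub_sq_eq hB x
  rw [h, sub_self, eq_comm, mul_eq_zero] at hfactor
  exact hfactor.resolve_left (pow_ne_zero 2 (sub_ne_zero.mpr hx))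

theorem stmt12_general (k m n : ℕ) (α : ℂ) (hα0 : α ≠ 0) (hα1 : α ≠ 1)
    (h1 : α ^ (n + 1) + ((m : ℂ) ^ 2 - k - 1) * α ^ 2 - (2 * (m : ℂ) ^ 2 - k) * α + (m : ℂ) ^ 2 = 0)
    (h2 : (1 / α) ^ (n + 1) + ((m : ℂ) ^ 2 - k - 1) * (1 / α) ^ 2 - (2 * (m : ℂ) ^ 2 - k) * (1 / α)
        + (m : ℂ) ^ 2 = 0) :
    ((m : ℂ) ^ 4 - (m : ℂ) ^ 2 * k - (m : ℂ) ^ 2) * α ^ 2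
      - (2 * (m : ℂ) ^ 4 - 2 * (m : ℂ) ^ 2 * k + (k : ℂ) ^ 2 + k) * α
      + ((m : ℂ) ^ 4 - (m : ℂ) ^ 2 * k - (m : ℂ) ^ 2) = 0 := by
  have hquartic := quadratic_mul_reciprocal_eq_sq n hα0 h1 h2
  have hg := symmetric_quadratic_eq_zero_of_quadratic_mul_reciprocal_eq_sq (by ring) hα1 hquartic
  linear_combination hg

theorem stmt12 (k m n : ℕ) (hk : 1 ≤ k) (hm : 1 ≤ m) (hn : 1 ≤ n)
    (hkm : (k : ℝ) + 1 < (m : ℝ) ^ 2) (α : ℂ) (hα0 : α ≠ 0) (hα1 : α ≠ 1)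
    (h1 : α ^ (n + 1) + ((m : ℂ) ^ 2 - k - 1) * α ^ 2 - (2 * (m : ℂ) ^ 2 - k) * α + (m : ℂ) ^ 2 = 0)
    (h2 : (1 / α) ^ (n + 1) + ((m : ℂ) ^ 2 - k - 1) * (1 / α) ^ 2 - (2 * (m : ℂ) ^ 2 - k) * (1 / α)
        + (m : ℂ) ^ 2 = 0) :
    ((m : ℂ) ^ 4 - (m : ℂ) ^ 2 * k - (m : ℂ) ^ 2) * α ^ 2
      - (2 * (m : ℂ) ^ 4 - 2 * (m : ℂ) ^ 2 * k + (k : ℂ) ^ 2 + k) * α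
      + ((m : ℂ) ^ 4 - (m : ℂ) ^ 2 * k - (m : ℂ) ^ 2) = 0 :=
  stmt12_general k m n α hα0 hα1 h1 h2
end

section
/- (Brauer) Let f(x) = x^n − a_{n−1}x^{n−1} − a_{n−2}x^{n−2} − ... − a₁x − a₀ with integer coefficients satisfying a_{n−1} ≥ a_{n−2} ≥ ... ≥ a₀ > 0. Then f is irreducible over ℚ. -/
open Polynomial Finset Filter Topology

/-!
Write `f = X ^ n - ∑ aᵢ Xⁱ`. Since `f 1 ≤ 0`, `f` has a real root `r ≥ 1`, and synthetic division
gives `f = (X - r) * q` with `q = ∑ cⱼ Xʲ`, `c₀ = a₀ / r`, `cⱼ₊₁ = (cⱼ + aⱼ₊₁) / r`. Monotonicity of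
the `aᵢ` makes the `cⱼ` strictly increasing up to `c_{n-1} = 1`, so by the Eneström–Kakeya theorem
every root of `q` lies in the open unit disc. A monic integer factor of `f` of positive degree has
a nonzero integer constant term, which is up to sign the product of its roots; hence it has a root
of modulus at least `1`, which can only be `r`. Two such factors would make `r` a double root of
`f`, i.e. a root of `q`. Gauss's lemma passes from `ℤ` to `ℚ`.
-/


theorem norm_le_one_of_sum_eq_zero_of_monotone {m : ℕ} {c : ℕ → ℝ} (hc0 : 0 ≤ c 0)
    (hcm : 0 < c m) (hc : ∀ j < m, c j ≤ c (j + 1)) {z : ℂ}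
    (hz : ∑ j ∈ range (m + 1), (c j : ℂ) * z ^ j = 0) : ‖z‖ ≤ 1 := by
  by_contra! hz1
  have summation_by_parts : ∀ k, (z - 1) * ∑ j ∈ range (k + 1), (c j : ℂ) * z ^ j
      = c k * z ^ (k + 1) - c 0 - ∑ j ∈ range k, ((c (j + 1) : ℂ) - c j) * z ^ (j + 1) := by
    intro k
    induction k with
    | zero =>
      simp only [zero_add, range_one, sum_singleton, pow_zero, mul_one, pow_one, range_zero,
        sum_empty, sub_zero]
      ring
    | succ k ih => rw [sum_range_succ, mul_add, ih, sum_range_succ]; ring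
  have hzm : c m * z ^ (m + 1) = c 0 + ∑ j ∈ range m, ((c (j + 1) : ℂ) - c j) * z ^ (j + 1) := by
    linear_combination (summation_by_parts m).symm + (z - 1) * hz
  have : c m * ‖z‖ ^ (m + 1) ≤ c m * ‖z‖ ^ m := calc
    c m * ‖z‖ ^ (m + 1) = ‖(c m : ℂ) * z ^ (m + 1)‖ := by
      rw [norm_mul, norm_pow, Complex.norm_of_nonneg hcm.le]
    _ ≤ c 0 + ∑ j ∈ range m, (c (j + 1) - c j) * ‖z‖ ^ (j + 1) := by
      rw [hzm]
      refine (norm_add_le _ _).trans (add_le_add (Complex.norm_of_nonneg hc0).le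
        ((norm_sum_le _ _).trans (sum_le_sum fun j hj => ?_)))
      rw [norm_mul, norm_pow, ← Complex.ofReal_sub,
        Complex.norm_of_nonneg (sub_nonneg.2 (hc j (mem_range.1 hj)))]
    _ ≤ c 0 * ‖z‖ ^ m + ∑ j ∈ range m, (c (j + 1) - c j) * ‖z‖ ^ m := by
      gcongr with j hj
      · exact le_mul_of_one_le_right hc0 (one_le_pow₀ hz1.le)
      · exact sub_nonneg.2 (hc j (mem_range.1 hj))
      · exact hz1.le
      · exact mem_range.1 hj
    _ = c m * ‖z‖ ^ m := by rw [← sum_mul, sum_range_sub c m]; ring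
  exact (pow_lt_pow_right₀ hz1 m.lt_succ_self).not_ge (le_of_mul_le_mul_left this hcm)

theorem norm_lt_one_of_sum_eq_zero_of_strictMono {m : ℕ} {c : ℕ → ℝ} (hc0 : 0 ≤ c 0)
    (hcm : 0 < c m) (hc : ∀ j < m, c j < c (j + 1)) {z : ℂ}
    (hz : ∑ j ∈ range (m + 1), (c j : ℂ) * z ^ j = 0) : ‖z‖ < 1 := by
  obtain ⟨ρ, hρc, hρ⟩ : ∃ ρ : ℝ, (∀ j ∈ range m, c j ≤ ρ * c (j + 1)) ∧ ρ ∈ Set.Ioo 0 1 := by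
    refine ((eventually_all_finset _).2 fun j hj => ?_).and (Ioo_mem_nhdsLT zero_lt_one) |>.exists
    have : Tendsto (fun ρ : ℝ => ρ * c (j + 1)) (𝓝[<] 1) (𝓝 (c (j + 1))) := by
      simpa using ((continuous_mul_const (c (j + 1))).tendsto 1).mono_left nhdsWithin_le_nhds
    exact (this.eventually (lt_mem_nhds (hc j (mem_range.1 hj)))).mono fun _ => le_of_lt
  have hw : ‖z / ρ‖ ≤ 1 := by
    refine norm_le_one_of_sum_eq_zero_of_monotone (m := m) (c := fun j => c j * ρ ^ j)
      (by simpa using hc0) (by have := hρ.1; positivity) (fun j hj => ?_) ?_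
    · calc c j * ρ ^ j ≤ ρ * c (j + 1) * ρ ^ j :=
            mul_le_mul_of_nonneg_right (hρc j (mem_range.2 hj)) (pow_nonneg hρ.1.le j)
        _ = c (j + 1) * ρ ^ (j + 1) := by ring
    · rw [← hz]
      refine sum_congr rfl fun j _ => ?_
      have hρj : (ρ : ℂ) ^ j ≠ 0 := pow_ne_zero j (Complex.ofReal_ne_zero.2 hρ.1.ne')
      rw [Complex.ofReal_mul, Complex.ofReal_pow, div_pow, mul_assoc, mul_div_cancel₀ _ hρj]
  rw [norm_div, Complex.norm_of_nonneg hρ.1.le, div_le_one hρ.1] at hw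
  exact hw.trans_lt hρ.2

theorem Multiset.norm_prod_lt_one {K : Type*} [NormedField K] {s : Multiset K} (hs : s ≠ 0)
    (h : ∀ x ∈ s, ‖x‖ < 1) : ‖s.prod‖ < 1 := by
  induction s using Multiset.induction_on with
  | empty => exact absurd rfl hs
  | cons x t ih =>
    have hx := h x (mem_cons_self x t)
    rw [prod_cons, norm_mul]
    rcases eq_or_ne t 0 with rfl | ht
    · simpa using hx
    · exact mul_lt_one_of_nonneg_of_lt_one_left (norm_nonneg x) hx
        (ih ht fun y hy => h y (mem_cons_of_mem hy)).le

theorem Polynomial.Monic.exists_isRoot_one_le_norm {p : ℤ[X]} (hp : p.Monic)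
    (hdeg : p.natDegree ≠ 0) (h0 : p.coeff 0 ≠ 0) :
    ∃ z : ℂ, (p.map (Int.castRingHom ℂ)).IsRoot z ∧ 1 ≤ ‖z‖ := by
  set q := p.map (Int.castRingHom ℂ)
  have hq : q.Monic := hp.map _
  have hsplit := IsAlgClosed.splits q
  by_contra! h
  have hroots : q.roots ≠ 0 := by
    rw [← Multiset.card_pos, ← hsplit.natDegree_eq_card_roots, hp.natDegree_map]
    exact Nat.pos_of_ne_zero hdeg
  have : ‖q.coeff 0‖ < 1 := by
    rw [hsplit.coeff_zero_eq_prod_roots_of_monic hq, norm_mul, norm_pow, norm_neg, norm_one,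
      one_pow, one_mul]
    exact Multiset.norm_prod_lt_one hroots fun z hz => h z (isRoot_of_mem_roots hz)
  rw [coeff_map, eq_intCast, Complex.norm_intCast] at this
  exact h0 (Int.abs_lt_one_iff.1 (by exact_mod_cast this))

theorem Polynomial.Monic.irreducible_of_map_eq_X_sub_C_mul {p : ℤ[X]} (hp : p.Monic)
    (h0 : p.coeff 0 ≠ 0) {w : ℂ} (hw : 1 ≤ ‖w‖) {q : ℂ[X]}
    (hpq : p.map (Int.castRingHom ℂ) = (X - C w) * q) (hq : ∀ z, q.IsRoot z → ‖z‖ < 1) :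
    Irreducible p := by
  refine hp.irreducible_iff_natDegree.2 ⟨?_, fun g h hg hh hgh => ?_⟩
  · rintro rfl
    simpa using congrArg (eval w) hpq
  by_contra! hdeg
  have isRoot_w : ∀ k l : ℤ[X], k * l = p → k.Monic → k.natDegree ≠ 0 →
      (k.map (Int.castRingHom ℂ)).IsRoot w := by
    rintro k l rfl hk hdk
    obtain ⟨z, hz, hz1⟩ := hk.exists_isRoot_one_le_norm hdk
      fun hk0 => h0 (by rw [mul_coeff_zero, hk0, zero_mul])
    have : eval z ((X - C w) * q) = 0 := by rw [← hpq, Polynomial.map_mul, eval_mul, hz, zero_mul]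
    rw [eval_mul, eval_sub, eval_X, eval_C, mul_eq_zero, sub_eq_zero] at this
    rcases this with rfl | hqz
    · exact hz
    · exact absurd (hq z hqz) hz1.not_gt
  have hdvd : (X - C w) * (X - C w) ∣ (X - C w) * q := by
    rw [← hpq, ← hgh, Polynomial.map_mul]
    exact mul_dvd_mul (dvd_iff_isRoot.2 (isRoot_w g h hgh hg hdeg.1))
      (dvd_iff_isRoot.2 (isRoot_w h g (by rw [mul_comm, hgh]) hh hdeg.2))
  exact (hq w (dvd_iff_isRoot.1 ((mul_dvd_mul_iff_left (X_sub_C_ne_zero w)).1 hdvd))).not_ge hw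

theorem X_sub_C_mul_sum_C_mul_X_pow {R : Type*} [CommRing R] {r : R} {a c : ℕ → R}
    (h0 : r * c 0 = a 0) (hsucc : ∀ j, r * c (j + 1) = c j + a (j + 1)) (m : ℕ) :
    (X - C r) * ∑ j ∈ range (m + 1), C (c j) * X ^ j
      = C (c m) * X ^ (m + 1) - ∑ j ∈ range (m + 1), C (a j) * X ^ j := by
  induction m with
  | zero =>
    simp only [zero_add, range_one, sum_singleton, pow_zero, mul_one, pow_one, ← h0, map_mul]
    ring
  | succ m ih =>
    have hC := congrArg C (hsucc m)
    rw [map_mul, map_add] at hC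
    rw [sum_range_succ, mul_add, ih, sum_range_succ _ (m + 1)]
    linear_combination -X ^ (m + 1) * hC

/-- The coefficients of the quotient of `X ^ (m + 1) - ∑ aᵢ Xⁱ` by `X - r`, computed by synthetic
division from the constant term. -/
noncomputable def deflationCoeff (a : ℕ → ℝ) (r : ℝ) : ℕ → ℝ
  | 0 => a 0 / r
  | j + 1 => (deflationCoeff a r j + a (j + 1)) / r

section deflationCoeff

variable {a : ℕ → ℝ} {r : ℝ}

theorem mul_deflationCoeff_zero (hr : r ≠ 0) : r * deflationCoeff a r 0 = a 0 :=
  mul_div_cancel₀ _ hr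

theorem mul_deflationCoeff_succ (hr : r ≠ 0) (j : ℕ) :
    r * deflationCoeff a r (j + 1) = deflationCoeff a r j + a (j + 1) :=
  mul_div_cancel₀ _ hr

theorem deflationCoeff_eq_one {m : ℕ} (hr : r ≠ 0)
    (hroot : r ^ (m + 1) = ∑ i ∈ range (m + 1), a i * r ^ i) : deflationCoeff a r m = 1 := by
  have h := congrArg (eval r) <| X_sub_C_mul_sum_C_mul_X_pow
    (mul_deflationCoeff_zero (a := a) hr) (mul_deflationCoeff_succ hr) m
  simp only [eval_mul, eval_sub, eval_X, eval_C, sub_self, zero_mul, eval_pow, eval_finsetSum,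
    ← hroot] at h
  refine mul_right_cancel₀ (pow_ne_zero (m + 1) hr) ?_
  linear_combination -h

theorem deflationCoeff_lt_succ {m : ℕ} (hr : 0 < r) (ha0 : 0 < a 0)
    (ha : ∀ j < m, a j ≤ a (j + 1)) {j : ℕ} (hj : j < m) :
    deflationCoeff a r j < deflationCoeff a r (j + 1) := by
  have step : ∀ j, (r - 1) * deflationCoeff a r j < a (j + 1) →
      deflationCoeff a r j < deflationCoeff a r (j + 1) := fun j h => by
    rw [deflationCoeff, lt_div_iff₀ hr]
    linarith
  have invariant : ∀ j ≤ m, (r - 1) * deflationCoeff a r j < a j := by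
    intro j hj
    induction j with
    | zero =>
      have : 0 < deflationCoeff a r 0 := div_pos ha0 hr
      linarith [mul_deflationCoeff_zero (a := a) hr.ne']
    | succ j ih =>
      have := step j ((ih (by omega)).trans_le (ha j hj))
      linarith [mul_deflationCoeff_succ (a := a) hr.ne' j]
  exact step j ((invariant j hj.le).trans_le (ha j hj))

end deflationCoeff

theorem Polynomial.monic_X_pow_sub_sum_C_mul_X_pow {R : Type*} [Ring R] (a : ℕ → R) (n : ℕ) :
    (X ^ n - ∑ i ∈ range n, C (a i) * X ^ i).Monic := by
  refine monic_X_pow_sub ?_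
  rw [← Fin.sum_univ_eq_sum_range (fun i => C (a i) * X ^ i)]
  exact degree_sum_fin_lt _

theorem exists_one_le_pow_eq_sum_mul_pow {m : ℕ} {a : ℕ → ℝ}
    (ha : 1 ≤ ∑ i ∈ range (m + 1), a i) :
    ∃ r : ℝ, 1 ≤ r ∧ r ^ (m + 1) = ∑ i ∈ range (m + 1), a i * r ^ i := by
  set P : ℝ[X] := X ^ (m + 1) - ∑ i ∈ range (m + 1), C (a i) * X ^ i
  have hP (t : ℝ) : eval t P = t ^ (m + 1) - ∑ i ∈ range (m + 1), a i * t ^ i := by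
    simp [P, eval_finsetSum]
  by_contra! h
  have hroots : ∀ t, P.IsRoot t → t < 1 := fun t ht =>
    not_le.1 fun ht1 => h t ht1 (sub_eq_zero.1 ((hP t).symm.trans ht))
  have hlc : 0 ≤ P.leadingCoeff := by
    rw [(monic_X_pow_sub_sum_C_mul_X_pow a (m + 1)).leadingCoeff]
    exact zero_le_one
  have := zero_lt_eval_of_roots_lt_of_leadingCoeff_nonneg hroots hlc
  rw [hP] at this
  simp only [one_pow, mul_one] at this
  linarith

theorem exists_X_pow_sub_sum_eq_X_sub_C_mul {m : ℕ} {a : ℕ → ℝ} (ha0 : 1 ≤ a 0)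
    (ha : ∀ j < m, a j ≤ a (j + 1)) :
    ∃ r : ℝ, 1 ≤ r ∧ ∃ q : ℂ[X],
      X ^ (m + 1) - ∑ i ∈ range (m + 1), C (a i : ℂ) * X ^ i = (X - C (r : ℂ)) * q ∧
      ∀ z, q.IsRoot z → ‖z‖ < 1 := by
  have ha_mono : MonotoneOn a (Set.Iic m) :=
    monotoneOn_of_le_add_one Set.ordConnected_Iic fun j _ _ hj => ha j hj
  have hsum : 1 ≤ ∑ i ∈ range (m + 1), a i := by
    refine ha0.trans (single_le_sum (fun i hi => ?_) (mem_range.2 m.succ_pos))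
    have : a 0 ≤ a i := ha_mono (Nat.zero_le m) (Nat.lt_succ_iff.1 (mem_range.1 hi)) (Nat.zero_le i)
    linarith
  obtain ⟨r, hr1, hr⟩ := exists_one_le_pow_eq_sum_mul_pow hsum
  have hr0 : 0 < r := by positivity
  set c := deflationCoeff a r
  have hcm : c m = 1 := deflationCoeff_eq_one hr0.ne' hr
  refine ⟨r, hr1, ∑ j ∈ range (m + 1), C (c j : ℂ) * X ^ j, ?_, fun z hz => ?_⟩
  · rw [X_sub_C_mul_sum_C_mul_X_pow (a := fun i => (a i : ℂ))
      (by exact_mod_cast mul_deflationCoeff_zero hr0.ne')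
      (fun j => by exact_mod_cast mul_deflationCoeff_succ hr0.ne' j), hcm]
    simp
  · refine norm_lt_one_of_sum_eq_zero_of_strictMono (m := m) (c := c)
      (div_nonneg (by linarith) hr0.le) (hcm ▸ one_pos)
      (fun j hj => deflationCoeff_lt_succ hr0 (by linarith) ha hj) ?_
    simpa [eval_finsetSum] using hz

theorem stmt14 (n : ℕ) (hn : 1 ≤ n) (a : ℕ → ℤ)
    (ha0 : 0 < a 0) (hmono : ∀ i, i + 1 < n → a i ≤ a (i + 1)) :
    Irreducible (((X : Polynomial ℤ) ^ n - ∑ i ∈ Finset.range n, C (a i) * X ^ i).map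
      (Int.castRingHom ℚ)) := by
  obtain ⟨m, rfl⟩ : ∃ m, n = m + 1 := ⟨n - 1, by omega⟩
  have hp := monic_X_pow_sub_sum_C_mul_X_pow a (m + 1)
  obtain ⟨r, hr1, q, hpq, hq⟩ := exists_X_pow_sub_sum_eq_X_sub_C_mul (m := m)
    (a := fun i => (a i : ℝ)) (by exact_mod_cast ha0) fun j hj => by
      exact_mod_cast hmono j (by omega)
  have hr : 1 ≤ ‖(r : ℂ)‖ := by rwa [Complex.norm_of_nonneg (by linarith)]
  rw [← IsPrimitive.Int.irreducible_iff_irreducible_map_cast hp.isPrimitive]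
  refine hp.irreducible_of_map_eq_X_sub_C_mul ?_ hr ?_ hq
  · simpa [coeff_X_pow] using ha0.ne'
  · rw [← hpq]
    simp [Polynomial.map_sum]
end

section
/- Let c be a positive integer, define f_1(x) = x − c and f_n(x) = x·f_{n−1}(x) − 1 for n ≥ 2. Then every f_n is irreducible over ℚ; i.e., the sequence forms a polynomial Cunningham chain of the second kind of infinite length. -/
/-!
Brauer's argument. Write `f_n(z) = zⁿ (1 - S_n(1/z))` with `S_n(w) = c w + w² + ⋯ + wⁿ`.
If `z` is a root with `‖z‖ ≥ 1` that is not a positive real, then `Re S_n(1/z) < S_n(1/‖z‖)`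
gives `f_n(‖z‖) < 0`, while the triangle inequality applied to
`(z - 1) f_n(z) = z^(n+1) - (c+1) zⁿ + (c-1) z^(n-1) + 1` gives `(‖z‖ - 1) f_n(‖z‖) ≥ 0`;
for `‖z‖ = 1` the real part of the same identity forces `z = 1`. As `S_n` is strictly increasing
on `[0, ∞)`, there is at most one positive root `β`, and `f_n'(β) > 0` by `f'_{k+1} = f_k + X f'_k`.
A monic integer factor of positive degree has a root of norm at least `1`, its constant term being
a nonzero integer; so in a factorisation both factors vanish at `β`, making `β` a double root.
-/

open Polynomial Finset

theorem Polynomial.aeval_ofReal_of_int (p : ℤ[X]) (x : ℝ) : aeval (x : ℂ) p = aeval x p :=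
  aeval_algebraMap_apply ℂ x p

theorem Polynomial.Monic.exists_aeval_eq_zero_one_le_norm {p : ℤ[X]} (hp : p.Monic)
    (hdeg : p.natDegree ≠ 0) (h0 : p.coeff 0 ≠ 0) : ∃ z : ℂ, aeval z p = 0 ∧ 1 ≤ ‖z‖ := by
  by_contra! hsmall
  have hsplit : Splits (p.map (algebraMap ℤ ℂ)) := IsAlgClosed.splits _
  have hroot : ∀ z ∈ p.aroots ℂ, aeval z p = 0 := fun z hz => (mem_aroots.mp hz).2
  have hnonempty : p.aroots ℂ ≠ 0 := by
    rw [← Multiset.card_pos, ← hsplit.natDegree_eq_card_roots, hp.natDegree_map]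
    exact Nat.pos_of_ne_zero hdeg
  have hlt : ‖(p.map (algebraMap ℤ ℂ)).coeff 0‖ < 1 := by
    rw [hsplit.coeff_zero_eq_prod_roots_of_monic (hp.map _), norm_mul, norm_pow, norm_neg,
      norm_one, one_pow, one_mul, ← aroots_def]
    calc ‖(p.aroots ℂ).prod‖ = ((p.aroots ℂ).map (‖·‖)).prod :=
          map_multiset_prod (normHom : ℂ →*₀ ℝ) _
      _ < ((p.aroots ℂ).map fun _ => (1 : ℝ)).prod :=
          Multiset.prod_map_lt_prod_map hnonempty _ _
            (fun z hz => norm_pos_iff.mpr fun hz0 => h0 <| by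
              simpa [hz0, ← coeff_zero_eq_aeval_zero'] using hroot z hz)
            (fun z hz => hsmall z (hroot z hz))
      _ = 1 := by simp
  have hge : 1 ≤ ‖(p.map (algebraMap ℤ ℂ)).coeff 0‖ := by
    rw [coeff_map, eq_intCast, Complex.norm_intCast]
    exact_mod_cast Int.one_le_abs h0
  exact hlt.not_ge hge

theorem Polynomial.Monic.irreducible_of_unique_simple_root_one_le_norm {p : ℤ[X]} (hp : p.Monic)
    (hdeg : p.natDegree ≠ 0) (h0 : p.coeff 0 ≠ 0)
    (hunique : ∀ z w : ℂ, aeval z p = 0 → aeval w p = 0 → 1 ≤ ‖z‖ → 1 ≤ ‖w‖ → z = w)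
    (hsimple : ∀ z : ℂ, aeval z p = 0 → 1 ≤ ‖z‖ → aeval z (derivative p) ≠ 0) :
    Irreducible p := by
  refine hp.irreducible_iff_natDegree.mpr ⟨by rintro rfl; simp at hdeg, fun g h hg hh hgh => ?_⟩
  by_contra! hdeg'
  have hcoeff : g.coeff 0 * h.coeff 0 ≠ 0 := by rwa [← mul_coeff_zero, hgh]
  obtain ⟨z, hz, hz1⟩ := hg.exists_aeval_eq_zero_one_le_norm hdeg'.1 (left_ne_zero_of_mul hcoeff)
  obtain ⟨w, hw, hw1⟩ := hh.exists_aeval_eq_zero_one_le_norm hdeg'.2 (right_ne_zero_of_mul hcoeff)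
  have hpz : aeval z p = 0 := by rw [← hgh, map_mul, hz, zero_mul]
  have hpw : aeval w p = 0 := by rw [← hgh, map_mul, hw, mul_zero]
  obtain rfl := hunique z w hpz hpw hz1 hw1
  refine hsimple z hpz hz1 ?_
  rw [← hgh, derivative_mul, map_add, map_mul, map_mul, hz, hw, mul_zero, zero_mul, add_zero]

structure IsCunninghamChain (c : ℤ) (f : ℕ → ℤ[X]) : Prop where
  one : f 1 = X - C c
  succ : ∀ n, 2 ≤ n → f n = X * f (n - 1) - 1

namespace IsCunninghamChain

/-- `c w + w² + ⋯ + wⁿ`, so that `f_n(z) = zⁿ (1 - tailSum c n z⁻¹)`. -/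
def tailSum {R : Type*} [CommRing R] (c : ℤ) (n : ℕ) (w : R) : R :=
  c * w + ∑ j ∈ range (n - 1), w ^ (j + 2)

theorem tailSum_strictMonoOn {c : ℤ} (hc : 0 < c) (n : ℕ) :
    StrictMonoOn (tailSum c n : ℝ → ℝ) (Set.Ici 0) := by
  intro v hv w hw hvw
  have hcv : (c : ℝ) * v < c * w := mul_lt_mul_of_pos_left hvw (by exact_mod_cast hc)
  have hsum : ∑ j ∈ range (n - 1), v ^ (j + 2) ≤ ∑ j ∈ range (n - 1), w ^ (j + 2) :=
    sum_le_sum fun j _ => pow_le_pow_left₀ hv hvw.le _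
  exact add_lt_add_of_lt_of_le hcv hsum

theorem tailSum_lt_tailSum {c : ℤ} {k n : ℕ} (hk : 1 ≤ k) (hkn : k < n) {w : ℝ} (hw : 0 < w) :
    tailSum c k w < tailSum c n w := by
  unfold tailSum
  gcongr ?_ + ?_
  exact sum_lt_sum_of_subset (range_subset_range.mpr (by omega))
    (mem_range.mpr (by omega : k - 1 < n - 1)) (by simp) (by positivity) fun j _ _ => by positivity

theorem re_tailSum_lt {c : ℤ} (hc : 0 < c) (n : ℕ) {w : ℂ} (hw : w.re < ‖w‖) :
    (tailSum c n w).re < tailSum c n ‖w‖ := by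
  have hcw : (c : ℝ) * w.re < c * ‖w‖ := mul_lt_mul_of_pos_left hw (by exact_mod_cast hc)
  have hsum : ∑ j ∈ range (n - 1), (w ^ (j + 2)).re ≤ ∑ j ∈ range (n - 1), ‖w‖ ^ (j + 2) :=
    sum_le_sum fun j _ => (Complex.re_le_norm _).trans (norm_pow w _).le
  simpa [tailSum, Complex.re_sum] using add_lt_add_of_lt_of_le hcw hsum

variable {c : ℤ} {f : ℕ → ℤ[X]} {n : ℕ}

theorem monic_and_natDegree_eq (hf : IsCunninghamChain c f) (hn : 1 ≤ n) :
    (f n).Monic ∧ (f n).natDegree = n := by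
  induction n, hn using Nat.le_induction with
  | base => rw [hf.one]; exact ⟨monic_X_sub_C c, natDegree_X_sub_C c⟩
  | succ k hk ih =>
    have hXf : (X * f k).natDegree = k + 1 := by rw [natDegree_X_mul ih.1.ne_zero, ih.2]
    rw [hf.succ (k + 1) (by omega), Nat.add_sub_cancel, ← C_1]
    refine ⟨(monic_X.mul ih.1).sub_of_left ?_, by rw [natDegree_sub_C, hXf]⟩
    rw [degree_C one_ne_zero, degree_eq_natDegree (monic_X.mul ih.1).ne_zero, hXf]
    exact_mod_cast k.succ_pos

theorem coeff_zero_ne_zero (hf : IsCunninghamChain c f) (hc : c ≠ 0) (hn : 1 ≤ n) :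
    (f n).coeff 0 ≠ 0 := by
  rcases hn.eq_or_lt with rfl | hn
  · simpa [hf.one] using hc
  · simp [hf.succ n hn]

theorem aeval_eq_pow_mul {K : Type*} [Field K] (hf : IsCunninghamChain c f) {z : K} (hz : z ≠ 0)
    (hn : 1 ≤ n) : aeval z (f n) = z ^ n * (1 - tailSum c n z⁻¹) := by
  induction n, hn using Nat.le_induction with
  | base =>
    simp only [hf.one, eq_intCast, aeval_sub, aeval_X, map_intCast, pow_one, tailSum, tsub_self,
      range_zero, sum_empty, add_zero]
    field_simp
  | succ k hk ih =>
    obtain ⟨m, rfl⟩ : ∃ m, k = m + 1 := ⟨k - 1, by omega⟩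
    have hstep : tailSum c (m + 2) z⁻¹ = tailSum c (m + 1) z⁻¹ + z⁻¹ ^ (m + 2) := by
      rw [tailSum, tailSum, show m + 2 - 1 = m + 1 from rfl, sum_range_succ, Nat.add_sub_cancel,
        add_assoc]
    have hcancel : z ^ (m + 2) * z⁻¹ ^ (m + 2) = 1 := by
      rw [← mul_pow, mul_inv_cancel₀ hz, one_pow]
    rw [hf.succ _ (by omega), Nat.add_sub_cancel, map_sub, map_mul, aeval_X, map_one, ih, hstep]
    linear_combination hcancel

theorem tailSum_eq_one {K : Type*} [Field K] (hf : IsCunninghamChain c f) {z : K} (hz : z ≠ 0)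
    (hn : 1 ≤ n) (hroot : aeval z (f n) = 0) : tailSum c n z⁻¹ = 1 := by
  rw [hf.aeval_eq_pow_mul hz hn, mul_eq_zero, sub_eq_zero] at hroot
  exact (hroot.resolve_left (pow_ne_zero n hz)).symm

theorem sub_one_mul_aeval {R : Type*} [CommRing R] (hf : IsCunninghamChain c f) (x : R)
    (hn : 1 ≤ n) :
    (x - 1) * aeval x (f n) = x ^ (n + 1) - (c + 1) * x ^ n + (c - 1) * x ^ (n - 1) + 1 := by
  induction n, hn using Nat.le_induction with
  | base =>
    simp only [hf.one, eq_intCast, aeval_sub, aeval_X, map_intCast, tsub_self, pow_zero]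
    ring
  | succ k hk ih =>
    obtain ⟨m, rfl⟩ : ∃ m, k = m + 1 := ⟨k - 1, by omega⟩
    rw [hf.succ _ (by omega), Nat.add_sub_cancel, map_sub, map_mul, aeval_X, map_one]
    simp only [Nat.add_sub_cancel] at ih ⊢
    linear_combination x * ih

theorem eq_of_aeval_eq_zero_of_pos (hf : IsCunninghamChain c f) (hc : 0 < c) (hn : 1 ≤ n)
    {x y : ℝ} (hx : 0 < x) (hy : 0 < y) (hxroot : aeval x (f n) = 0)
    (hyroot : aeval y (f n) = 0) : x = y := by
  refine inv_injective <| (tailSum_strictMonoOn hc n).injOn (inv_nonneg.mpr hx.le)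
    (inv_nonneg.mpr hy.le) ?_
  rw [hf.tailSum_eq_one hx.ne' hn hxroot, hf.tailSum_eq_one hy.ne' hn hyroot]

theorem aeval_pos_of_lt (hf : IsCunninghamChain c f) {x : ℝ} (hx : 0 < x)
    (hroot : aeval x (f n) = 0) {k : ℕ} (hk : 1 ≤ k) (hkn : k < n) : 0 < aeval x (f k) := by
  have hlt : tailSum c k x⁻¹ < 1 := by
    rw [← hf.tailSum_eq_one hx.ne' (by omega) hroot]
    exact tailSum_lt_tailSum hk hkn (inv_pos.mpr hx)
  rw [hf.aeval_eq_pow_mul hx.ne' hk]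
  exact mul_pos (pow_pos hx k) (sub_pos.mpr hlt)

theorem aeval_derivative_pos (hf : IsCunninghamChain c f) (hn : 1 ≤ n) {x : ℝ} (hx : 0 < x)
    (hroot : aeval x (f n) = 0) : 0 < aeval x (derivative (f n)) := by
  suffices ∀ k, 1 ≤ k → k ≤ n → 0 < aeval x (derivative (f k)) from this n hn le_rfl
  intro k hk
  induction k, hk using Nat.le_induction with
  | base => simp [hf.one]
  | succ k hk ih =>
    intro hkn
    have hderiv : derivative (f (k + 1)) = f k + X * derivative (f k) := by
      rw [hf.succ _ (by omega), Nat.add_sub_cancel, derivative_sub, derivative_mul, derivative_X,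
        derivative_one, one_mul, sub_zero]
    rw [hderiv, map_add, map_mul, aeval_X]
    have := hf.aeval_pos_of_lt hx hroot hk hkn
    have := ih (by omega)
    positivity

theorem aeval_norm_neg (hf : IsCunninghamChain c f) (hc : 0 < c) (hn : 1 ≤ n) {z : ℂ}
    (hz : z ≠ 0) (hroot : aeval z (f n) = 0) (hre : z.re < ‖z‖) : aeval ‖z‖ (f n) < 0 := by
  have hz' : 0 < ‖z‖ := norm_pos_iff.mpr hz
  have hre_inv : z⁻¹.re < ‖z⁻¹‖ := by
    rw [Complex.inv_re, Complex.normSq_eq_norm_sq, norm_inv]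
    calc z.re / ‖z‖ ^ 2 < ‖z‖ / ‖z‖ ^ 2 := div_lt_div_of_pos_right hre (by positivity)
      _ = ‖z‖⁻¹ := by field_simp
  have hgt : 1 < tailSum c n ‖z‖⁻¹ := by
    have := re_tailSum_lt hc n hre_inv
    rwa [hf.tailSum_eq_one hz hn hroot, Complex.one_re, norm_inv] at this
  rw [hf.aeval_eq_pow_mul hz'.ne' hn]
  exact mul_neg_of_pos_of_neg (pow_pos hz' n) (by linarith)

theorem aeval_norm_nonneg (hf : IsCunninghamChain c f) (hc : 0 < c) (hn : 1 ≤ n) {z : ℂ}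
    (hroot : aeval z (f n) = 0) (h1 : 1 < ‖z‖) : 0 ≤ aeval ‖z‖ (f n) := by
  have hc1 : (1 : ℝ) ≤ c := by exact_mod_cast hc
  have hz : ((c + 1 : ℝ) : ℂ) * z ^ n = z ^ (n + 1) + ((c - 1 : ℝ) : ℂ) * z ^ (n - 1) + 1 := by
    push_cast
    linear_combination -(hf.sub_one_mul_aeval z hn).symm.trans (by rw [hroot, mul_zero])
  have hnorm : (c + 1) * ‖z‖ ^ n ≤ ‖z‖ ^ (n + 1) + (c - 1) * ‖z‖ ^ (n - 1) + 1 := by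
    calc (c + 1) * ‖z‖ ^ n = ‖((c + 1 : ℝ) : ℂ) * z ^ n‖ := by
          rw [norm_mul, norm_pow, Complex.norm_of_nonneg (by linarith)]
      _ ≤ ‖z ^ (n + 1)‖ + ‖((c - 1 : ℝ) : ℂ) * z ^ (n - 1)‖ + ‖(1 : ℂ)‖ := hz ▸ norm_add₃_le
      _ = _ := by rw [norm_mul, norm_pow, norm_pow, norm_one, Complex.norm_of_nonneg (by linarith)]
  have hprod : 0 ≤ (‖z‖ - 1) * aeval ‖z‖ (f n) := by
    rw [hf.sub_one_mul_aeval _ hn]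
    linarith
  exact nonneg_of_mul_nonneg_right hprod (by linarith)

theorem re_eq_one (hf : IsCunninghamChain c f) (hc : 0 < c) (hn : 1 ≤ n) {z : ℂ}
    (hroot : aeval z (f n) = 0) (h1 : ‖z‖ = 1) : z.re = 1 := by
  have hc1 : (1 : ℝ) ≤ c := by exact_mod_cast hc
  obtain ⟨m, rfl⟩ : ∃ m, n = m + 1 := ⟨n - 1, by omega⟩
  set u := (starRingEnd ℂ) z
  have hzu : z * u = 1 := by rw [Complex.mul_conj, Complex.normSq_eq_norm_sq, h1]; norm_num
  have hz := hf.sub_one_mul_aeval z hn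
  rw [hroot, mul_zero, Nat.add_sub_cancel] at hz
  have hpow : (z * u) ^ m = 1 := by rw [hzu, one_pow]
  have hpow' : (z * u) ^ (m + 1) = 1 := by rw [hzu, one_pow]
  have hkey : z + (c - 1) * u + u ^ (m + 1) = c + 1 := by
    linear_combination (-u ^ (m + 1)) * hz + (c + 1 - z) * hpow' + (1 - c) * u * hpow
  have hre := congrArg Complex.re hkey
  simp only [Complex.add_re, Complex.mul_re, Complex.sub_re, Complex.sub_im, Complex.intCast_re,
    Complex.intCast_im, Complex.one_re, Complex.one_im, u, Complex.conj_re] at hre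
  have hzre : z.re ≤ 1 := h1 ▸ Complex.re_le_norm z
  have hure : (u ^ (m + 1)).re ≤ 1 := by
    simpa [u, h1] using Complex.re_le_norm (u ^ (m + 1))
  nlinarith

theorem eq_norm_of_one_le_norm (hf : IsCunninghamChain c f) (hc : 0 < c) (hn : 1 ≤ n) {z : ℂ}
    (hroot : aeval z (f n) = 0) (h1 : 1 ≤ ‖z‖) : z = ‖z‖ := by
  refine Complex.eq_coe_norm_of_nonneg (Complex.re_eq_norm.mp ?_)
  rcases h1.eq_or_lt with h1 | h1
  · rw [← h1]
    exact hf.re_eq_one hc hn hroot h1.symm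
  · by_contra hre
    have hneg := hf.aeval_norm_neg hc hn (norm_pos_iff.mp (by linarith)) hroot
      ((Complex.re_le_norm z).lt_of_ne hre)
    linarith [hf.aeval_norm_nonneg hc hn hroot h1]

theorem aeval_norm_eq_zero (hf : IsCunninghamChain c f) (hc : 0 < c) (hn : 1 ≤ n) {z : ℂ}
    (hroot : aeval z (f n) = 0) (h1 : 1 ≤ ‖z‖) : aeval ‖z‖ (f n) = 0 := by
  rw [hf.eq_norm_of_one_le_norm hc hn hroot h1, aeval_ofReal_of_int] at hroot
  exact_mod_cast hroot

end IsCunninghamChain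

theorem stmt15 (c : ℤ) (hc : 0 < c) (f : ℕ → Polynomial ℤ)
    (hf1 : f 1 = X - C c)
    (hrec : ∀ n, 2 ≤ n → f n = X * f (n - 1) - 1) :
    ∀ n, 1 ≤ n → Irreducible ((f n).map (Int.castRingHom ℚ)) := by
  intro n hn
  have hf : IsCunninghamChain c f := ⟨hf1, hrec⟩
  obtain ⟨hmonic, hdeg⟩ := hf.monic_and_natDegree_eq hn
  have hreal (z : ℂ) (hz : aeval z (f n) = 0) (h1 : 1 ≤ ‖z‖) :
      z = ‖z‖ ∧ aeval ‖z‖ (f n) = 0 :=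
    ⟨hf.eq_norm_of_one_le_norm hc hn hz h1, hf.aeval_norm_eq_zero hc hn hz h1⟩
  refine (IsPrimitive.Int.irreducible_iff_irreducible_map_cast hmonic.isPrimitive).mp <|
    hmonic.irreducible_of_unique_simple_root_one_le_norm (by omega)
      (hf.coeff_zero_ne_zero hc.ne' hn) (fun z w hz hw hz1 hw1 => ?_) (fun z hz hz1 => ?_)
  · obtain ⟨hz, hzroot⟩ := hreal z hz hz1
    obtain ⟨hw, hwroot⟩ := hreal w hw hw1
    rw [hz, hw, hf.eq_of_aeval_eq_zero_of_pos hc hn (by linarith) (by linarith) hzroot hwroot]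
  · obtain ⟨hz, hzroot⟩ := hreal z hz hz1
    rw [hz, aeval_ofReal_of_int]
    exact_mod_cast (hf.aeval_derivative_pos hn (by linarith) hzroot).ne'
end

section
/- Let p be a prime, define f_1(x) = p·x + 1 and f_n(x) = x·f_{n−1}(x) + 1 for n ≥ 2. Then f_n(x) = p·x^n + x^{n−1} + x^{n−2} + ... + x + 1, and every f_n is irreducible over ℚ. -/
/-!
Multiplying `f_n = p X^n + X^(n-1) + ⋯ + 1` by `X - 1` gives `X^n (p X - (p - 1)) - 1`, so a
root `z` with `‖z‖ ≥ 1` satisfies `‖p z - (p - 1)‖ ≤ 1`, which forces `z = 1`; but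
`f_n(1) = p + n ≠ 0`. Hence all complex roots lie in the open unit disc. In a factorisation
`f_n = a b` over `ℤ` the constant terms are `±1` and one factor, say `a`, has leading coefficient
`±1` because `p` is prime. If `a` were not constant, `|a(0)| = |lead a| · ∏ |roots of a| < 1`
would contradict `a(0) = ±1`. Gauss's lemma transfers irreducibility from `ℤ` to `ℚ`.
-/

open Polynomial Finset

namespace Complex

/-- For `p > 1`, the disc `‖p z - (p - 1)‖ ≤ 1` has radius `1 / p` and centre `1 - 1 / p`, so
it meets `{‖z‖ ≥ 1}` only at `z = 1`. -/
theorem eq_one_of_one_le_norm_of_norm_mul_sub_le_one {p : ℝ} (hp : 1 < p) {z : ℂ}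
    (hz : 1 ≤ ‖z‖) (h : ‖p * z - (p - 1)‖ ≤ 1) : z = 1 := by
  have key :
      ‖p * z - (p - 1)‖ ^ 2 = p * (p - 1) * ‖z - 1‖ ^ 2 + p * ‖z‖ ^ 2 - (p - 1) := by
    simp only [Complex.sq_norm, normSq_apply, sub_re, sub_im, mul_re, mul_im, ofReal_re,
      ofReal_im, one_re, one_im]
    ring
  have hz2 : 1 ≤ ‖z‖ ^ 2 := one_le_pow₀ hz
  have h2 : ‖p * z - (p - 1)‖ ^ 2 ≤ 1 := pow_le_one₀ (norm_nonneg _) h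
  have : ‖z - 1‖ ^ 2 ≤ 0 := by
    nlinarith [mul_pos (by linarith : (0 : ℝ) < p) (by linarith : (0 : ℝ) < p - 1)]
  rw [← sub_eq_zero, ← norm_eq_zero]
  exact pow_eq_zero_iff two_ne_zero |>.mp (le_antisymm this (sq_nonneg _))

theorem norm_lt_one_of_mul_pow_add_geom_sum_eq_zero {p : ℝ} (hp : 1 < p) {n : ℕ} {z : ℂ}
    (hz : p * z ^ n + ∑ i ∈ range n, z ^ i = 0) : ‖z‖ < 1 := by
  by_contra! h1
  have hroot : z ^ n * (p * z - (p - 1)) = 1 := by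
    linear_combination (z - 1) * hz - geom_sum_mul z n
  have hle : ‖(p : ℂ) * z - (p - 1)‖ ≤ 1 := by
    have := congrArg norm hroot
    rw [norm_mul, norm_pow, norm_one] at this
    nlinarith [one_le_pow₀ (n := n) h1, norm_nonneg ((p : ℂ) * z - (p - 1))]
  obtain rfl := eq_one_of_one_le_norm_of_norm_mul_sub_le_one hp h1 (by exact_mod_cast hle)
  norm_num at hz
  norm_cast at hz
  linarith

end Complex

namespace Polynomial

section Semiring

variable {R : Type*} [Semiring R]

theorem coeff_zero_C_mul_X_pow_add_geom_sum (c : R) {n : ℕ} (hn : n ≠ 0) :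
    (C c * X ^ n + ∑ i ∈ range n, X ^ i).coeff 0 = 1 := by
  simp [coeff_X_pow, hn.symm, Nat.pos_of_ne_zero hn]

theorem leadingCoeff_C_mul_X_pow_add_geom_sum {c : R} (hc : c ≠ 0) (n : ℕ) :
    (C c * X ^ n + ∑ i ∈ range n, X ^ i).leadingCoeff = c := by
  have hdeg : (∑ i ∈ range n, (X : R[X]) ^ i).degree < n := by
    refine (degree_sum_le _ _).trans_lt ((Finset.sup_lt_iff (WithBot.bot_lt_coe n)).mpr ?_)
    intro i hi
    exact (degree_X_pow_le i).trans_lt (WithBot.coe_lt_coe.mpr (mem_range.mp hi))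
  rw [leadingCoeff_add_of_degree_lt' (by rwa [degree_C_mul_X_pow n hc]), leadingCoeff_C_mul_X_pow]

end Semiring

theorem norm_coeff_zero_lt_norm_leadingCoeff {P : ℂ[X]} (hP : 0 < P.natDegree)
    (hroots : ∀ z ∈ P.roots, ‖z‖ < 1) : ‖P.coeff 0‖ < ‖P.leadingCoeff‖ := by
  have hP0 : P ≠ 0 := ne_zero_of_natDegree_gt hP
  by_cases h0 : P.coeff 0 = 0
  · simpa [h0] using hP0
  have hprod : ‖P.roots.prod‖ < 1 := by
    have hroots0 : ∀ z ∈ P.roots, 0 < ‖z‖ := fun z hz ↦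
      norm_pos_iff.mpr fun hz0 ↦ h0 <| by
        simpa [hz0, coeff_zero_eq_eval_zero] using (mem_roots hP0).mp hz
    have hne : P.roots ≠ 0 := by
      rw [← Multiset.card_pos, ← (IsAlgClosed.splits P).natDegree_eq_card_roots]
      exact hP
    calc ‖P.roots.prod‖ = (P.roots.map (‖·‖)).prod :=
          map_multiset_prod (normHom (α := ℂ)) P.roots
      _ < (P.roots.map fun _ ↦ (1 : ℝ)).prod :=
          Multiset.prod_map_lt_prod_map hne _ _ hroots0 hroots
      _ = 1 := by simp
  rw [(IsAlgClosed.splits P).coeff_zero_eq_leadingCoeff_mul_prod_roots, norm_mul, norm_mul,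
    norm_pow, norm_neg, norm_one, one_pow, one_mul]
  exact mul_lt_of_lt_one_right (norm_pos_iff.mpr (leadingCoeff_ne_zero.mpr hP0)) hprod

theorem isUnit_of_isUnit_leadingCoeff_of_isUnit_coeff_zero {a : ℤ[X]}
    (hlead : IsUnit a.leadingCoeff) (h0 : IsUnit (a.coeff 0))
    (hroots : ∀ z : ℂ, aeval z a = 0 → ‖z‖ < 1) : IsUnit a := by
  suffices a.natDegree = 0 by
    rw [eq_C_of_natDegree_eq_zero this]
    exact isUnit_C.mpr h0
  by_contra! hdeg
  have hinj : Function.Injective (algebraMap ℤ ℂ) := (algebraMap ℤ ℂ).injective_int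
  have hlt := norm_coeff_zero_lt_norm_leadingCoeff (P := a.map (algebraMap ℤ ℂ))
    (by rwa [natDegree_map_eq_of_injective hinj, Nat.pos_iff_ne_zero])
    (fun z hz ↦ hroots z ((mem_aroots.mp hz).2))
  rw [coeff_map, leadingCoeff_map_of_injective hinj, eq_intCast, eq_intCast, Complex.norm_intCast,
    Complex.norm_intCast, ← Int.cast_abs, ← Int.cast_abs, Int.isUnit_iff_abs_eq.mp h0,
    Int.isUnit_iff_abs_eq.mp hlead] at hlt
  exact hlt.false

theorem irreducible_of_prime_leadingCoeff_of_isUnit_coeff_zero {f : ℤ[X]}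
    (hlead : Prime f.leadingCoeff) (h0 : IsUnit (f.coeff 0))
    (hroots : ∀ z : ℂ, aeval z f = 0 → ‖z‖ < 1) : Irreducible f := by
  refine ⟨fun hf ↦ hlead.not_isUnit ?_, fun a b hab ↦ ?_⟩
  · obtain ⟨r, hr, rfl⟩ := Polynomial.isUnit_iff.mp hf
    rwa [leadingCoeff_C]
  have h0ab : IsUnit (a.coeff 0 * b.coeff 0) := by rwa [← mul_coeff_zero, ← hab]
  rw [hab, leadingCoeff_mul] at hlead
  rcases hlead.irreducible.isUnit_or_isUnit rfl with ha | hb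
  · refine .inl (isUnit_of_isUnit_leadingCoeff_of_isUnit_coeff_zero ha
      (isUnit_of_mul_isUnit_left h0ab) fun z hz ↦ hroots z ?_)
    rw [hab, map_mul, hz, zero_mul]
  · refine .inr (isUnit_of_isUnit_leadingCoeff_of_isUnit_coeff_zero hb
      (isUnit_of_mul_isUnit_right h0ab) fun z hz ↦ hroots z ?_)
    rw [hab, map_mul, hz, mul_zero]

end Polynomial

theorem stmt16 (p : ℕ) (hp : p.Prime) (f : ℕ → Polynomial ℤ)
    (hf1 : f 1 = C (p : ℤ) * X + 1)
    (hrec : ∀ n, 2 ≤ n → f n = X * f (n - 1) + 1) :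
    ∀ n, 1 ≤ n →
      f n = C (p : ℤ) * X ^ n + ∑ i ∈ Finset.range n, X ^ i ∧
      Irreducible ((f n).map (Int.castRingHom ℚ)) := by
  have hformula : ∀ n, 1 ≤ n → f n = C (p : ℤ) * X ^ n + ∑ i ∈ range n, X ^ i := by
    intro n hn
    induction n, hn using Nat.le_induction with
    | base => simpa using hf1
    | succ m hm ih =>
      rw [hrec (m + 1) (by omega), Nat.add_sub_cancel, ih, geom_sum_succ]
      ring
  intro n hn
  refine ⟨hformula n hn, ?_⟩
  have h0 : IsUnit ((f n).coeff 0) := by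
    rw [hformula n hn, coeff_zero_C_mul_X_pow_add_geom_sum _ (by omega)]
    exact isUnit_one
  have hlead : Prime (f n).leadingCoeff := by
    rw [hformula n hn, leadingCoeff_C_mul_X_pow_add_geom_sum (by exact_mod_cast hp.ne_zero)]
    exact Nat.prime_iff_prime_int.mp hp
  refine (IsPrimitive.Int.irreducible_iff_irreducible_map_cast
    fun r hr ↦ isUnit_of_dvd_unit ((C_dvd_iff_dvd_coeff r _).mp hr 0) h0).mp
    (irreducible_of_prime_leadingCoeff_of_isUnit_coeff_zero hlead h0 fun z hz ↦ ?_)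
  refine Complex.norm_lt_one_of_mul_pow_add_geom_sum_eq_zero (p := p) (n := n)
    (by exact_mod_cast hp.one_lt) ?_
  simpa [hformula n hn] using hz
end
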